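/- Let r > 1 be real, let K be a number field, and let d₁ < d₂ < ⋯ < d_M be r-mighty norms of K. Then the closure of σ_{r,K}(I_K) has at least M + 1 connected components. -/

import Mathlib

/-!
If a nonzero prime `𝔭` divides `I`, then `σ(I) ≥ 1 + N(𝔭)^{-r}` (the divisors `1` and `𝔭`). If
every prime dividing `I` has norm `> d`, expanding the divisor sum as a product of truncated
geometric series gives `σ(I) ≤ ∏_{N(𝔭) > d} (1 - N(𝔭)^{-r})⁻¹`. For an `r`-mighty norm `d` the
values of `σ`, hence their closure, therefore miss a nonempty open interval, which splits the
closure into two clopen pieces. Taking primes `𝔭ᵢ` of norm `dᵢ`, the `M + 1` points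
`σ(𝓞_K) = 1 < σ(𝔭_M) < ⋯ < σ(𝔭_1)` are pairwise separated by these gaps.
-/

open NumberField

/-- The ideal divisor function `σ_{r,K}(I) = ∑_{J ∣ I} N(J)^{-r}`. -/
noncomputable def sigmaK (K : Type*) [Field K] [NumberField K] (r : ℝ)
    (I : Ideal (𝓞 K)) : ℝ :=
  ∑' J : {J : Ideal (𝓞 K) // J ∣ I}, (Ideal.absNorm (J : Ideal (𝓞 K)) : ℝ) ^ (-r)

/-- `d > 1` is an `r`-mighty norm of `K` if `d` is the norm of some nonzero prime ideal of
`𝓞_K` and `1 + d^{-r} > ∏_{𝔭 prime, N(𝔭) > d} (1 − N(𝔭)^{-r})⁻¹`. -/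
def IsMightyNorm (K : Type*) [Field K] [NumberField K] (r : ℝ) (d : ℕ) : Prop :=
  1 < d ∧ (∃ P : Ideal (𝓞 K), P.IsPrime ∧ P ≠ ⊥ ∧ Ideal.absNorm P = d) ∧
    ∏' P : {P : Ideal (𝓞 K) // P.IsPrime ∧ d < Ideal.absNorm P},
        (1 - (Ideal.absNorm (P : Ideal (𝓞 K)) : ℝ) ^ (-r))⁻¹
      < 1 + (d : ℝ) ^ (-r)

open Set Filter

section Gaps

variable {α : Type*} [LinearOrder α] [TopologicalSpace α] [OrderClosedTopology α] {S : Set α}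

theorem ConnectedComponents.coe_ne_coe_of_subset_Iic_union_Ici {a b : α} (hab : a < b)
    (hS : S ⊆ Iic a ∪ Ici b) {x y : S} (hx : (x : α) ≤ a) (hy : b ≤ (y : α)) :
    (x : ConnectedComponents S) ≠ y := by
  have hIic_eq_Iio : ((↑) ⁻¹' Iic a : Set S) = (↑) ⁻¹' Iio b := by
    ext z
    rcases hS z.2 with hz | hz
    · simp only [mem_preimage, mem_Iic, mem_Iio] at hz ⊢
      exact ⟨fun _ => hz.trans_lt hab, fun _ => hz⟩
    · simp only [mem_preimage, mem_Iic, mem_Iio, mem_Ici] at hz ⊢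
      exact ⟨fun h => absurd (hab.trans_le hz) h.not_gt, fun h => absurd hz h.not_ge⟩
  have hclopen : IsClopen ((↑) ⁻¹' Iic a : Set S) :=
    ⟨isClosed_Iic.preimage continuous_subtype_val,
      hIic_eq_Iio ▸ isOpen_Iio.preimage continuous_subtype_val⟩
  intro h
  have hy_mem : y ∈ connectedComponent x :=
    ConnectedComponents.coe_eq_coe.mp h ▸ mem_connectedComponent
  exact (hab.trans_le hy).not_ge (hclopen.connectedComponent_subset hx hy_mem)

theorem Cardinal.natCast_succ_le_mk_connectedComponents_of_gaps {M : ℕ} {c b x : Fin M → α}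
    {x₀ : α} (hcb : ∀ i, c i < b i) (hS : ∀ i, S ⊆ Iic (c i) ∪ Ici (b i)) (hx₀ : x₀ ∈ S)
    (hx : ∀ i, x i ∈ S) (hx₀c : ∀ i, x₀ ≤ c i) (hbx : ∀ i, b i ≤ x i)
    (hxc : ∀ i j, i < j → x j ≤ c i) :
    ((M + 1 : ℕ) : Cardinal) ≤ Cardinal.mk (ConnectedComponents S) := by
  let y : Fin (M + 1) → S := Fin.cons ⟨x₀, hx₀⟩ fun i => ⟨x i, hx i⟩
  have hy : Function.Injective fun k => (y k : ConnectedComponents S) := by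
    refine Function.Injective.of_lt_imp_ne fun k l hkl => ?_
    obtain ⟨j, rfl⟩ := Fin.exists_succ_eq.mpr (Fin.ne_zero_of_lt hkl)
    cases k using Fin.cases with
    | zero =>
      exact ConnectedComponents.coe_ne_coe_of_subset_Iic_union_Ici (hcb j) (hS j) (hx₀c j) (hbx j)
    | succ i =>
      exact (ConnectedComponents.coe_ne_coe_of_subset_Iic_union_Ici (hcb i) (hS i)
        (hxc i j (Fin.succ_lt_succ_iff.mp hkl)) (hbx i)).symm
  simpa using Cardinal.lift_mk_le_lift_mk_of_injective hy

end Gaps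

theorem Real.prod_le_tprod_of_one_le {ι : Type*} {f : ι → ℝ} (hf : Multipliable f)
    (h1 : ∀ i, 1 ≤ f i) (s : Finset ι) : ∏ i ∈ s, f i ≤ ∏' i, f i :=
  ge_of_tendsto hf.hasProd <| (eventually_ge_atTop s).mono fun _ hst =>
    Finset.prod_le_prod_of_subset_of_one_le hst (fun i _ => zero_le_one.trans (h1 i))
      fun i _ _ => h1 i

theorem Real.multipliable_inv_one_sub_of_summable {ι : Type*} {f : ι → ℝ} (hf : Summable f) :
    Multipliable fun i => (1 - f i)⁻¹ := by
  have hsmall : ∀ᶠ i in cofinite, |f i| ≤ 1 / 2 := by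
    simpa [Real.norm_eq_abs] using hf.tendsto_cofinite_zero.eventually
      (Metric.closedBall_mem_nhds (0 : ℝ) (by norm_num : (0 : ℝ) < 1 / 2))
  have hg : Summable fun i => (1 - f i)⁻¹ - 1 := by
    refine (hf.abs.mul_left 2).of_norm_bounded_eventually ?_
    filter_upwards [hsmall] with i hi
    have hpos : 1 / 2 ≤ 1 - f i := by linarith [le_abs_self (f i)]
    have hdiv : (1 - f i)⁻¹ - 1 = f i / (1 - f i) := by field_simp; ring
    rw [Real.norm_eq_abs, hdiv, abs_div, abs_of_pos (show 0 < 1 - f i by linarith),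
      div_le_iff₀ (by linarith)]
    nlinarith [abs_nonneg (f i)]
  simpa using Real.multipliable_one_add_of_summable hg

theorem summable_of_le_comp_of_card_fiber_le {α β : Type*} {f : α → ℝ} {g : β → ℝ} (ρ : α → β)
    (n : ℕ) (hf : 0 ≤ f) (hg : 0 ≤ g) (hfg : ∀ a, f a ≤ g (ρ a))
    (hfiber : ∀ (b : β) (s : Finset α), (∀ a ∈ s, ρ a = b) → s.card ≤ n) (hgs : Summable g) :
    Summable f := by
  classical
  refine summable_of_sum_le hf (c := n * ∑' b, g b) fun u => ?_
  calc ∑ a ∈ u, f a ≤ ∑ a ∈ u, g (ρ a) := Finset.sum_le_sum fun a _ => hfg a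
    _ = ∑ b ∈ u.image ρ, (u.filter (ρ · = b)).card • g b := Finset.sum_comp g ρ
    _ ≤ ∑ b ∈ u.image ρ, n * g b := Finset.sum_le_sum fun b _ => by
        rw [nsmul_eq_mul]
        exact mul_le_mul_of_nonneg_right
          (by exact_mod_cast hfiber b _ fun a ha => (Finset.mem_filter.mp ha).2) (hg b)
    _ = n * ∑ b ∈ u.image ρ, g b := (Finset.mul_sum ..).symm
    _ ≤ n * ∑' b, g b :=
        mul_le_mul_of_nonneg_left (hgs.sum_le_tsum _ fun b _ => hg b) n.cast_nonneg

namespace Ideal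

variable {S : Type*} [CommRing S] [IsDedekindDomain S] [Module.Free ℤ S]

theorem ne_bot_of_lt_absNorm {P : Ideal S} {n : ℕ} (h : n < absNorm P) : P ≠ ⊥ := by
  rintro rfl
  simp at h

theorem absNorm_prod_pow_rpow {ι : Type*} (s : Finset ι) (P : ι → Ideal S) (v : ι → ℕ) (r : ℝ) :
    (absNorm (∏ i ∈ s, P i ^ v i) : ℝ) ^ r = ∏ i ∈ s, ((absNorm (P i) : ℝ) ^ r) ^ v i := by
  rw [map_prod, Nat.cast_prod, ← Real.finsetProd_rpow _ _ fun _ _ => Nat.cast_nonneg _]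
  refine Finset.prod_congr rfl fun i _ => ?_
  rw [map_pow, Nat.cast_pow, ← Real.rpow_natCast, ← Real.rpow_natCast,
    ← Real.rpow_mul (Nat.cast_nonneg _), ← Real.rpow_mul (Nat.cast_nonneg _), mul_comm]

variable [Module.Finite ℤ S]

theorem two_le_absNorm_of_isPrime {P : Ideal S} (hP : P.IsPrime) (h0 : P ≠ ⊥) :
    2 ≤ absNorm P := by
  have h1 : absNorm P ≠ 0 := absNorm_eq_zero_iff.not.mpr h0
  have h2 : absNorm P ≠ 1 := absNorm_eq_one_iff.not.mpr hP.ne_top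
  omega

theorem dvd_absNorm_of_natCast_mem {P : Ideal S} (hP : P.IsPrime) {q : ℕ} (hq : q.Prime)
    (hqP : (q : S) ∈ P) : q ∣ absNorm P := by
  have hdvd : absNorm P ∣ q ^ Module.finrank ℤ S := by
    rw [← absNorm_span_natCast]
    exact map_dvd absNorm (dvd_iff_le.mpr ((span_singleton_le_iff_mem _).mpr hqP))
  obtain ⟨j, -, hj⟩ := (Nat.dvd_prime_pow hq).mp hdvd
  have hj0 : j ≠ 0 := by
    rintro rfl
    exact absNorm_eq_one_iff.not.mpr hP.ne_top (by simpa using hj)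
  exact hj ▸ dvd_pow_self q hj0

theorem card_le_finrank_of_natCast_mem {q : ℕ} (hq : q.Prime) (s : Finset (Ideal S))
    (hs : ∀ P ∈ s, P.IsPrime ∧ P ≠ ⊥ ∧ (q : S) ∈ P) : s.card ≤ Module.finrank ℤ S := by
  have hcoprime : (s : Set (Ideal S)).Pairwise (Function.onFun IsCoprime id) :=
    fun P hP Q hQ hPQ => isCoprime_iff_sup_eq.mpr <|
      ((hs P hP).1.isMaximal (hs P hP).2.1).coprime_of_ne ((hs Q hQ).1.isMaximal (hs Q hQ).2.1) hPQ
  have hprod : ∏ P ∈ s, P ∣ span {(q : S)} := Finset.prod_dvd_of_coprime hcoprime fun P hP =>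
    dvd_iff_le.mpr ((span_singleton_le_iff_mem _).mpr (hs P hP).2.2)
  have hpow : q ^ s.card ∣ q ^ Module.finrank ℤ S :=
    calc q ^ s.card = ∏ _P ∈ s, q := (Finset.prod_const q).symm
      _ ∣ ∏ P ∈ s, absNorm P := Finset.prod_dvd_prod_of_dvd _ _ fun P hP =>
          dvd_absNorm_of_natCast_mem (hs P hP).1 hq (hs P hP).2.2
      _ = absNorm (∏ P ∈ s, P) := (map_prod absNorm _ s).symm
      _ ∣ absNorm (span {(q : S)}) := map_dvd absNorm hprod
      _ = q ^ Module.finrank ℤ S := absNorm_span_natCast q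
  exact (Nat.pow_dvd_pow_iff_le_right hq.one_lt).mp hpow

/-- Each nonzero prime `P` has norm `p ^ k ≥ p` for a rational prime `p ∈ P`, and at most
`rank S` primes contain a given `p`; so the sum is at most `rank S * ∑ p ^ (-r)`. -/
theorem summable_absNorm_primes_rpow_neg {r : ℝ} (hr : 1 < r) :
    Summable fun P : {P : Ideal S // P.IsPrime ∧ P ≠ ⊥} => (absNorm P.1 : ℝ) ^ (-r) := by
  choose ρ k hk hρP hρ hρk using fun P : {P : Ideal S // P.IsPrime ∧ P ≠ ⊥} =>
    haveI := P.2.1.isMaximal P.2.2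
    exists_prime_and_absNorm_eq_pow P.1
  refine summable_of_le_comp_of_card_fiber_le (g := fun q : ℕ => (q : ℝ) ^ (-r)) ρ
    (Module.finrank ℤ S) (fun _ => Real.rpow_nonneg (Nat.cast_nonneg _) _)
    (fun _ => Real.rpow_nonneg (Nat.cast_nonneg _) _) (fun P => ?_) (fun q s hs => ?_)
    (Real.summable_nat_rpow.mpr (neg_lt_neg hr))
  · refine Real.rpow_le_rpow_of_nonpos (by exact_mod_cast (hρ P).pos) ?_ (by linarith)
    rw [hρk P]
    exact_mod_cast Nat.le_self_pow (hk P).ne' _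
  · rcases s.eq_empty_or_nonempty with rfl | ⟨P₀, hP₀⟩
    · simp
    have hq : q.Prime := hs P₀ hP₀ ▸ hρ P₀
    rw [← Finset.card_map (Function.Embedding.subtype _)]
    refine card_le_finrank_of_natCast_mem hq _ fun P hP => ?_
    obtain ⟨P', hP', rfl⟩ := Finset.mem_map.mp hP
    exact ⟨P'.2.1, P'.2.2, hs P' hP' ▸ hρP P'⟩

theorem multipliable_inv_one_sub_absNorm_rpow {r : ℝ} (hr : 1 < r) (n : ℕ) :
    Multipliable fun P : {P : Ideal S // P.IsPrime ∧ n < absNorm P} =>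
      (1 - (absNorm P.1 : ℝ) ^ (-r))⁻¹ := by
  let e : {P : Ideal S // P.IsPrime ∧ n < absNorm P} → {P : Ideal S // P.IsPrime ∧ P ≠ ⊥} :=
    fun P => ⟨P.1, P.2.1, ne_bot_of_lt_absNorm P.2.2⟩
  have he : Function.Injective e := fun P Q h => Subtype.ext (Subtype.mk.inj h)
  have hs := (summable_absNorm_primes_rpow_neg (S := S) hr).comp_injective he
  exact Real.multipliable_inv_one_sub_of_summable hs

end Ideal

section DivisorFunction

open Ideal UniqueFactorizationMonoid

variable {K : Type*} [Field K] [NumberField K] {r : ℝ}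

theorem one_add_rpow_le_sigmaK {I P : Ideal (𝓞 K)} (hI : I ≠ 0) (hP : P.IsPrime) (hPI : P ∣ I) :
    1 + (absNorm P : ℝ) ^ (-r) ≤ sigmaK K r I := by
  classical
  let := fintypeSubtypeDvd I hI
  let top : {J : Ideal (𝓞 K) // J ∣ I} := ⟨⊤, dvd_iff_le.mpr le_top⟩
  let P' : {J : Ideal (𝓞 K) // J ∣ I} := ⟨P, hPI⟩
  have hne : top ≠ P' := fun h => hP.ne_top (congrArg Subtype.val h).symm
  calc 1 + (absNorm P : ℝ) ^ (-r)
      = ∑ J ∈ {top, P'}, (absNorm (J : Ideal (𝓞 K)) : ℝ) ^ (-r) := by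
        simp [Finset.sum_pair hne, top, P']
    _ ≤ sigmaK K r I := by
        rw [sigmaK, tsum_fintype]
        exact Finset.sum_le_sum_of_subset_of_nonneg (Finset.subset_univ _)
          fun J _ _ => Real.rpow_nonneg (Nat.cast_nonneg _) _

/-- A divisor `J` of `I` is determined by its exponent vector `(v_𝔭(J))_{𝔭 ∣ I}`, which is bounded
by that of `I`; summing over all bounded exponent vectors gives the product. -/
theorem sigmaK_le_prod_geom_sum {I : Ideal (𝓞 K)} (hI : I ≠ 0) :
    sigmaK K r I ≤ ∏ p ∈ (normalizedFactors I).toFinset,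
      ∑ j ∈ Finset.range ((normalizedFactors I).count p + 1), ((absNorm p : ℝ) ^ (-r)) ^ j := by
  classical
  let := fintypeSubtypeDvd I hI
  set F := (normalizedFactors I).toFinset
  let g : Ideal (𝓞 K) → ℝ := fun J => (absNorm J : ℝ) ^ (-r)
  let exps : {J // J ∣ I} → F → ℕ := fun J p => (normalizedFactors J.1).count p.1
  have hle : ∀ J : {J // J ∣ I}, normalizedFactors J.1 ≤ normalizedFactors I := fun J =>
    (dvd_iff_normalizedFactors_le_normalizedFactors (ne_zero_of_dvd_ne_zero hI J.2) hI).mp J.2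
  have hJ : ∀ J : {J // J ∣ I}, J.1 = ∏ p : F, p.1 ^ exps J p := by
    intro J
    rw [Finset.univ_eq_attach, Finset.prod_attach F fun p => p ^ (normalizedFactors J.1).count p,
      ← Finset.prod_multiset_count_of_subset _ _ (Multiset.toFinset_subset.mpr
        (Multiset.subset_of_le (hle J))), Ideal.prod_normalizedFactors_eq_self]
    exact ne_zero_of_dvd_ne_zero hI J.2
  let B := Fintype.piFinset fun p : F => Finset.range ((normalizedFactors I).count p.1 + 1)
  have hexps : ∀ J, exps J ∈ B := by
    intro J
    simp only [B, Fintype.mem_piFinset, Finset.mem_range, Nat.lt_succ_iff]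
    exact fun p => Multiset.le_iff_count.mp (hle J) p
  have hinj : Function.Injective exps := fun J J' h => Subtype.ext <| by rw [hJ J, hJ J', h]
  calc sigmaK K r I = ∑ J, ∏ p : F, g p ^ exps J p := by
        rw [sigmaK, tsum_fintype]
        refine Finset.sum_congr rfl fun J _ => ?_
        rw [hJ J]
        exact absNorm_prod_pow_rpow _ _ _ _
    _ = ∑ v ∈ Finset.univ.map ⟨exps, hinj⟩, ∏ p : F, g p ^ v p := by
        rw [Finset.sum_map]
        rfl
    _ ≤ ∑ v ∈ B, ∏ p : F, g p ^ v p := by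
        refine Finset.sum_le_sum_of_subset_of_nonneg ?_ fun v _ _ => ?_
        · rintro v hv
          obtain ⟨J, -, rfl⟩ := Finset.mem_map.mp hv
          exact hexps J
        · exact Finset.prod_nonneg fun p _ =>
            pow_nonneg (Real.rpow_nonneg (Nat.cast_nonneg _) _) _
    _ = ∏ p : F, ∑ j ∈ Finset.range ((normalizedFactors I).count p.1 + 1), g p ^ j :=
        (Finset.prod_univ_sum _ _).symm
    _ = _ := by
        rw [Finset.univ_eq_attach]
        exact Finset.prod_attach F fun p =>
          ∑ j ∈ Finset.range ((normalizedFactors I).count p + 1), g p ^ j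

theorem sigmaK_le_tprod_of_lt_absNorm (hr : 1 < r) (n : ℕ) {I : Ideal (𝓞 K)} (hI : I ≠ 0)
    (hI_primes : ∀ Q : Ideal (𝓞 K), Q.IsPrime → Q ∣ I → n < absNorm Q) :
    sigmaK K r I ≤ ∏' P : {P : Ideal (𝓞 K) // P.IsPrime ∧ n < absNorm P},
      (1 - (absNorm P.1 : ℝ) ^ (-r))⁻¹ := by
  classical
  have hF : ∀ p ∈ (normalizedFactors I).toFinset, p.IsPrime ∧ n < absNorm p := fun p hp =>
    have hp := Multiset.mem_toFinset.mp hp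
    have := isPrime_of_prime (prime_of_normalized_factor p hp)
    ⟨this, hI_primes p this (dvd_of_mem_normalizedFactors hp)⟩
  have hx : ∀ P : {P : Ideal (𝓞 K) // P.IsPrime ∧ n < absNorm P},
      0 ≤ (absNorm P.1 : ℝ) ^ (-r) ∧ (absNorm P.1 : ℝ) ^ (-r) < 1 := fun P =>
    have h2 := two_le_absNorm_of_isPrime P.2.1 (ne_bot_of_lt_absNorm P.2.2)
    ⟨Real.rpow_nonneg (Nat.cast_nonneg _) _,
      Real.rpow_lt_one_of_one_lt_of_neg (by exact_mod_cast h2) (by linarith)⟩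
  calc sigmaK K r I
      ≤ ∏ p ∈ (normalizedFactors I).toFinset,
          ∑ j ∈ Finset.range ((normalizedFactors I).count p + 1), ((absNorm p : ℝ) ^ (-r)) ^ j :=
        sigmaK_le_prod_geom_sum hI
    _ = ∏ P ∈ (normalizedFactors I).toFinset.subtype fun P => P.IsPrime ∧ n < absNorm P,
          ∑ j ∈ Finset.range ((normalizedFactors I).count P.1 + 1),
            ((absNorm P.1 : ℝ) ^ (-r)) ^ j :=
        (Finset.prod_subtype_of_mem _ hF).symm
    _ ≤ ∏ P ∈ (normalizedFactors I).toFinset.subtype fun P => P.IsPrime ∧ n < absNorm P,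
          (1 - (absNorm P.1 : ℝ) ^ (-r))⁻¹ := by
        refine Finset.prod_le_prod (fun P _ => Finset.sum_nonneg fun j _ => pow_nonneg (hx P).1 _)
          fun P _ => ?_
        have := geom_sum_Ico_le_of_lt_one (m := 0) (n := (normalizedFactors I).count P.1 + 1)
          (hx P).1 (hx P).2
        rwa [← Finset.range_eq_Ico, pow_zero, one_div] at this
    _ ≤ _ := Real.prod_le_tprod_of_one_le (multipliable_inv_one_sub_absNorm_rpow hr n)
        (fun P => (one_le_inv₀ (by linarith [(hx P).2])).mpr (by linarith [(hx P).1])) _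

theorem sigmaK_le_tprod_or_one_add_le (hr : 1 < r) (n : ℕ) {I : Ideal (𝓞 K)} (hI : I ≠ 0) :
    sigmaK K r I ≤ ∏' P : {P : Ideal (𝓞 K) // P.IsPrime ∧ n < absNorm P},
        (1 - (absNorm P.1 : ℝ) ^ (-r))⁻¹ ∨
      1 + (n : ℝ) ^ (-r) ≤ sigmaK K r I := by
  by_cases h : ∀ Q : Ideal (𝓞 K), Q.IsPrime → Q ∣ I → n < absNorm Q
  · exact .inl (sigmaK_le_tprod_of_lt_absNorm hr n hI h)
  push Not at h
  obtain ⟨Q, hQ, hQI, hQn⟩ := h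
  have hQ0 : Q ≠ ⊥ := by
    rintro rfl
    exact hI (zero_dvd_iff.mp hQI)
  have hpos : (0 : ℝ) < absNorm Q := by
    exact_mod_cast Nat.pos_of_ne_zero (absNorm_eq_zero_iff.not.mpr hQ0)
  have hle : (n : ℝ) ^ (-r) ≤ (absNorm Q : ℝ) ^ (-r) :=
    Real.rpow_le_rpow_of_nonpos hpos (by exact_mod_cast hQn) (by linarith)
  exact .inr (by linarith [one_add_rpow_le_sigmaK (r := r) hI hQ hQI])

end DivisorFunction

/-- If `d₁ < d₂ < ⋯ < d_M` are `r`-mighty norms of `K`, then the closure of `σ_{r,K}(I_K)`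
has at least `M + 1` connected components. -/
theorem stmt16 (r : ℝ) (hr : 1 < r) (K : Type*) [Field K] [NumberField K]
    (M : ℕ) (d : Fin M → ℕ) (hmono : StrictMono d)
    (hmighty : ∀ i, IsMightyNorm K r (d i)) :
    ((M + 1 : ℕ) : Cardinal) ≤
      Cardinal.mk (ConnectedComponents
        ↥(closure (sigmaK K r '' {I : Ideal (𝓞 K) | I ≠ 0}))) := by
  choose P hP hP0 hPd using fun i => (hmighty i).2.1
  have hdvd_P : ∀ i Q, Q.IsPrime → Q ∣ P i → Q = P i := fun i Q hQ hQP =>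
    (((hP i).isMaximal (hP0 i)).eq_of_le hQ.ne_top (Ideal.dvd_iff_le.mp hQP)).symm
  refine Cardinal.natCast_succ_le_mk_connectedComponents_of_gaps
    (x₀ := sigmaK K r ⊤) (x := fun i => sigmaK K r (P i)) (b := fun i => 1 + (d i : ℝ) ^ (-r))
    (fun i => (hmighty i).2.2) (fun i => ?_) (subset_closure ⟨⊤, top_ne_bot, rfl⟩)
    (fun i => subset_closure ⟨P i, hP0 i, rfl⟩) (fun i => ?_) (fun i => ?_) (fun i j hij => ?_)
  · exact closure_minimal (by rintro _ ⟨I, hI, rfl⟩; exact sigmaK_le_tprod_or_one_add_le hr _ hI)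
      (isClosed_Iic.union isClosed_Ici)
  · exact sigmaK_le_tprod_of_lt_absNorm hr _ top_ne_bot fun Q hQ hQ_top =>
      (hQ.ne_top (top_le_iff.mp (Ideal.dvd_iff_le.mp hQ_top))).elim
  · simpa [hPd i] using one_add_rpow_le_sigmaK (r := r) (hP0 i) (hP i) dvd_rfl
  · exact sigmaK_le_tprod_of_lt_absNorm hr _ (hP0 j) fun Q hQ hQP =>
      hdvd_P j Q hQ hQP ▸ (hPd j).symm ▸ hmono hij
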